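/- arXiv:1704.00937 — 2 statements merged into one kernel-verified Lean document; each statement's English description precedes it below -/
import Mathlib

section
/- Let D be a digraph on vertex set {1,…,n}. Then the semigroup ⟨D⟩ is H-trivial if and only if the underlying graph of every strong component of D is a path graph. -/
/-- The transformation of `{1,…,n}` sending `a` to `b` and fixing all other points. -/
def arcT {n : ℕ} (a b : Fin n) : Fin n → Fin n := fun v => if v = a then b else v

/-- The semigroup `⟨D⟩` generated by the arcs of the digraph `D`; transformations act on
the right, so a product `ε₁ε₂⋯ε_k` is the function `ε_k ∘ ⋯ ∘ ε₁`. -/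
def genSg {n : ℕ} (D : Set (Fin n × Fin n)) : Set (Fin n → Fin n) :=
  { α | ∃ l : List (Fin n × Fin n), l ≠ [] ∧ (∀ p ∈ l, p ∈ D) ∧
      α = l.foldl (fun f p => arcT p.1 p.2 ∘ f) id }

/-- The product `x·y` in the right-action convention: apply `x` first, then `y`. -/
def sgMul {n : ℕ} (x y : Fin n → Fin n) : Fin n → Fin n := y ∘ x

/-- The right ideal `xS¹ = {x} ∪ xS`. -/
def rIdeal {n : ℕ} (S : Set (Fin n → Fin n)) (x : Fin n → Fin n) : Set (Fin n → Fin n) :=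
  insert x { y | ∃ s ∈ S, y = sgMul x s }

/-- The left ideal `S¹x = {x} ∪ Sx`. -/
def lIdeal {n : ℕ} (S : Set (Fin n → Fin n)) (x : Fin n → Fin n) : Set (Fin n → Fin n) :=
  insert x { y | ∃ s ∈ S, y = sgMul s x }

/-- The two-sided ideal `S¹xS¹`. -/
def jIdeal {n : ℕ} (S : Set (Fin n → Fin n)) (x : Fin n → Fin n) : Set (Fin n → Fin n) :=
  { y | ∃ s ∈ insert id S, ∃ t ∈ insert id S, y = sgMul s (sgMul x t) }

def RRel {n : ℕ} (S : Set (Fin n → Fin n)) (x y : Fin n → Fin n) : Prop :=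
  rIdeal S x = rIdeal S y

def LRel {n : ℕ} (S : Set (Fin n → Fin n)) (x y : Fin n → Fin n) : Prop :=
  lIdeal S x = lIdeal S y

def JRel {n : ℕ} (S : Set (Fin n → Fin n)) (x y : Fin n → Fin n) : Prop :=
  jIdeal S x = jIdeal S y

def RTrivial {n : ℕ} (S : Set (Fin n → Fin n)) : Prop :=
  ∀ x ∈ S, ∀ y ∈ S, RRel S x y → x = y

def LTrivial {n : ℕ} (S : Set (Fin n → Fin n)) : Prop :=
  ∀ x ∈ S, ∀ y ∈ S, LRel S x y → x = y

def HTrivial {n : ℕ} (S : Set (Fin n → Fin n)) : Prop :=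
  ∀ x ∈ S, ∀ y ∈ S, RRel S x y → LRel S x y → x = y

def JTrivial {n : ℕ} (S : Set (Fin n → Fin n)) : Prop :=
  ∀ x ∈ S, ∀ y ∈ S, JRel S x y → x = y

/-- `α` has a cycle of length `k`: `k` distinct points `a₀,…,a_{k-1}` with
`α(aᵢ) = a_{i+1 mod k}`. -/
def IsCycleOf {n : ℕ} (α : Fin n → Fin n) (k : ℕ) : Prop :=
  0 < k ∧ ∃ a : ZMod k → Fin n, Function.Injective a ∧ ∀ i, α (a i) = a (i + 1)

/-- `l(D)`: the maximal length of a cycle of an element of `⟨D⟩`. -/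
noncomputable def lD {n : ℕ} (D : Set (Fin n × Fin n)) : ℕ :=
  sSup { k | ∃ α ∈ genSg D, IsCycleOf α k }

/-- The arc set of a graph. -/
def arcsOf {n : ℕ} (G : SimpleGraph (Fin n)) : Set (Fin n × Fin n) :=
  { p | G.Adj p.1 p.2 }

/-- `l(G)` for a graph `G`. -/
noncomputable def lG {n : ℕ} (G : SimpleGraph (Fin n)) : ℕ := lD (arcsOf G)

/-- Reachability along directed walks of `D`. -/
def dreach {n : ℕ} (D : Set (Fin n × Fin n)) : Fin n → Fin n → Prop :=
  Relation.ReflTransGen (fun a b => (a, b) ∈ D)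

/-- The strong component of the vertex `v`. -/
def strongComp {n : ℕ} (D : Set (Fin n × Fin n)) (v : Fin n) : Set (Fin n) :=
  { u | dreach D u v ∧ dreach D v u }

/-- The underlying graph of the digraph `D`. -/
def underlying {n : ℕ} (D : Set (Fin n × Fin n)) : SimpleGraph (Fin n) where
  Adj a b := a ≠ b ∧ ((a, b) ∈ D ∨ (b, a) ∈ D)
  symm := ⟨fun a b h => ⟨h.1.symm, h.2.symm⟩⟩
  loopless := ⟨fun a h => h.1 rfl⟩

/-- `v 0, v 1, …, v r` is a cycle of the digraph `D`. -/
def IsDCycle {n : ℕ} (D : Set (Fin n × Fin n)) (r : ℕ) (v : ℕ → Fin n) : Prop :=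
  1 ≤ r ∧ v r = v 0 ∧ (∀ i < r, ∀ j < r, v i = v j → i = j) ∧
    ∀ i < r, (v i, v (i + 1)) ∈ D

def HasDCycle {n : ℕ} (D : Set (Fin n × Fin n)) : Prop := ∃ r v, IsDCycle D r v

def DAcyclic {n : ℕ} (D : Set (Fin n × Fin n)) : Prop := ¬ HasDCycle D

/-- `G` is a subgroup contained in the transformation semigroup `S`. -/
def IsSubgroupIn {n : ℕ} (S G : Set (Fin n → Fin n)) : Prop :=
  G ⊆ S ∧ (∀ x ∈ G, ∀ y ∈ G, sgMul x y ∈ G) ∧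
    ∃ e ∈ G, (∀ x ∈ G, sgMul e x = x ∧ sgMul x e = x) ∧
      ∀ x ∈ G, ∃ y ∈ G, sgMul x y = e ∧ sgMul y x = e

/-- Every subgroup of `S` is trivial. -/
def SgAperiodic {n : ℕ} (S : Set (Fin n → Fin n)) : Prop :=
  ∀ G, IsSubgroupIn S G → G.Subsingleton

/-!
For a semigroup of transformations of a finite set, `H`-triviality amounts to every periodic
point of every element being fixed: if `x ≠ y` are `H`-related then `y = s ∘ x` for some `s`
permuting `range x` nontrivially, and conversely an element with a nontrivial cycle has
`H`-related powers `α^p ≠ α^(p+1)`.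

If some strong component is not a path, it contains an arc `(u, w)` without its reverse, a
vertex with three neighbours, or a cycle. Each of these gives three vertices `a, b, c` with walks
`a ⇝ c`, `b ⇝ a`, `c ⇝ b` avoiding the third vertex, and composing the arcs of these walks
yields an element of `⟨D⟩` exchanging `a` and `b`.

If every strong component is a path, number its vertices along the path: an arc transformation
preserves this order on the points it keeps in the component, so every element of `⟨D⟩` is
monotone on each of its cycles, hence fixes them pointwise.
-/

section

open Function Relation

variable {n : ℕ}

def wordMap (l : List (Fin n × Fin n)) : Fin n → Fin n :=
  l.foldl (fun f e => arcT e.1 e.2 ∘ f) id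

theorem foldl_arcT_comp (l : List (Fin n × Fin n)) (g : Fin n → Fin n) :
    l.foldl (fun f e => arcT e.1 e.2 ∘ f) g = wordMap l ∘ g := by
  induction l generalizing g with
  | nil => rfl
  | cons e l ih =>
    change l.foldl _ (arcT e.1 e.2 ∘ g) = l.foldl _ (arcT e.1 e.2 ∘ id) ∘ g
    rw [ih, ih]
    rfl

theorem wordMap_cons (e : Fin n × Fin n) (l : List (Fin n × Fin n)) :
    wordMap (e :: l) = wordMap l ∘ arcT e.1 e.2 :=
  foldl_arcT_comp l _

theorem wordMap_append (l₁ l₂ : List (Fin n × Fin n)) :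
    wordMap (l₁ ++ l₂) = wordMap l₂ ∘ wordMap l₁ := by
  rw [wordMap, List.foldl_append, foldl_arcT_comp]
  rfl

theorem wordMap_singleton (a b : Fin n) : wordMap [(a, b)] = arcT a b := rfl

theorem arcT_self (a b : Fin n) : arcT a b a = b := if_pos rfl

theorem arcT_of_ne {a b v : Fin n} (h : v ≠ a) : arcT a b v = v := if_neg h

theorem sgMul_mem_genSg {D : Set (Fin n × Fin n)} {x y : Fin n → Fin n} (hx : x ∈ genSg D)
    (hy : y ∈ genSg D) : sgMul x y ∈ genSg D := by
  obtain ⟨l₁, hne, hl₁, rfl⟩ := hx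
  obtain ⟨l₂, -, hl₂, rfl⟩ := hy
  refine ⟨l₁ ++ l₂, by simp [hne], fun e he => ?_, (wordMap_append l₁ l₂).symm⟩
  rcases List.mem_append.1 he with h | h
  exacts [hl₁ e h, hl₂ e h]

def PeriodicPtsFixed (S : Set (Fin n → Fin n)) : Prop :=
  ∀ α ∈ S, ∀ a ∈ periodicPts α, IsFixedPt α a

theorem isFixedPt_of_isFixedPt_iterate {X : Type*} {f : X → X} {x : X} (hx : x ∈ periodicPts f)
    {k : ℕ} (h : IsFixedPt f (f^[k] x)) : IsFixedPt f x := by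
  rw [← minimalPeriod_eq_one_iff_isFixedPt, ← minimalPeriod_apply_iterate hx k]
  exact minimalPeriod_eq_one_iff_isFixedPt.2 h

section HTrivial

variable {S : Set (Fin n → Fin n)}

theorem rRel_of_eq_sgMul (hS : ∀ x ∈ S, ∀ y ∈ S, sgMul x y ∈ S) {x y s t : Fin n → Fin n}
    (hs : s ∈ S) (ht : t ∈ S) (hy : y = sgMul x s) (hx : x = sgMul y t) : RRel S x y := by
  have key : ∀ a b u, u ∈ S → a = sgMul b u → rIdeal S a ⊆ rIdeal S b := by
    rintro a b u hu rfl z (rfl | ⟨w, hw, rfl⟩)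
    · exact Or.inr ⟨u, hu, rfl⟩
    · exact Or.inr ⟨sgMul u w, hS u hu w hw, rfl⟩
  exact (key x y t ht hx).antisymm (key y x s hs hy)

theorem lRel_of_eq_sgMul (hS : ∀ x ∈ S, ∀ y ∈ S, sgMul x y ∈ S) {x y s t : Fin n → Fin n}
    (hs : s ∈ S) (ht : t ∈ S) (hy : y = sgMul s x) (hx : x = sgMul t y) : LRel S x y := by
  have key : ∀ a b u, u ∈ S → a = sgMul u b → lIdeal S a ⊆ lIdeal S b := by
    rintro a b u hu rfl z (rfl | ⟨w, hw, rfl⟩)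
    · exact Or.inr ⟨u, hu, rfl⟩
    · exact Or.inr ⟨sgMul w u, hS w hw u hu, rfl⟩
  exact (key x y t ht hx).antisymm (key y x s hs hy)

theorem iterate_succ_mem (hS : ∀ x ∈ S, ∀ y ∈ S, sgMul x y ∈ S) {α : Fin n → Fin n}
    (hα : α ∈ S) : ∀ k, α^[k + 1] ∈ S
  | 0 => hα
  | k + 1 => by
    rw [iterate_succ']
    exact hS _ (iterate_succ_mem hS hα k) α hα

theorem HTrivial.exists_iterate_succ_eq (hS : ∀ x ∈ S, ∀ y ∈ S, sgMul x y ∈ S)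
    (hH : HTrivial S) {α : Fin n → Fin n} (hα : α ∈ S) : ∃ p, α^[p + 1] = α^[p + 2] := by
  obtain ⟨i, j, hij, heq⟩ := (Set.finite_univ (α := Fin n → Fin n)).exists_lt_map_eq_of_forall_mem
    (f := fun k => α^[k + 1]) fun _ => Set.mem_univ _
  refine ⟨i, ?_⟩
  obtain ⟨d, rfl⟩ := Nat.exists_eq_add_of_lt hij
  rcases d with _ | d
  · exact heq
  have hx : α^[i + 1] = α^[d + 1] ∘ α^[i + 2] := by
    rw [heq, ← iterate_add]; congr 1; omega
  have hx' : α^[i + 1] = α^[i + 2] ∘ α^[d + 1] := by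
    rw [heq, ← iterate_add]; congr 1; omega
  exact hH _ (iterate_succ_mem hS hα i) _ (iterate_succ_mem hS hα (i + 1))
    (rRel_of_eq_sgMul hS hα (iterate_succ_mem hS hα d) (iterate_succ' α (i + 1)) hx)
    (lRel_of_eq_sgMul hS hα (iterate_succ_mem hS hα d) (iterate_succ α (i + 1)) hx')

theorem HTrivial.periodicPtsFixed (hS : ∀ x ∈ S, ∀ y ∈ S, sgMul x y ∈ S) (hH : HTrivial S) :
    PeriodicPtsFixed S := by
  intro α hα a ha
  obtain ⟨p, hp⟩ := hH.exists_iterate_succ_eq hS hα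
  refine isFixedPt_of_isFixedPt_iterate ha (k := p + 1) ?_
  rw [IsFixedPt, ← iterate_succ_apply' α (p + 1), hp]

/-- Here `y = s ∘ x` with `range y = range x`, so `s` permutes the finite set `range x`, and
nontrivially since `y ≠ x`. -/
theorem exists_periodicPt_not_isFixedPt {x y : Fin n → Fin n} (hR : RRel S x y)
    (hL : LRel S x y) (hxy : x ≠ y) : ∃ s ∈ S, ∃ a ∈ periodicPts s, ¬ IsFixedPt s a := by
  obtain h | ⟨s, hs, rfl⟩ : y ∈ rIdeal S x := hR ▸ Set.mem_insert y _
  · exact absurd h.symm hxy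
  have hrange : Set.range (s ∘ x) = Set.range x := by
    apply le_antisymm
    · obtain h | ⟨t, -, h⟩ : s ∘ x ∈ lIdeal S x := hL ▸ Set.mem_insert _ _
      · exact (congrArg Set.range h).le
      · exact (congrArg Set.range h).trans_le (Set.range_comp_subset_range t x)
    · obtain h | ⟨t, -, h⟩ : x ∈ lIdeal S (s ∘ x) := hL.symm ▸ Set.mem_insert _ _
      · exact (congrArg Set.range h).le
      · exact (congrArg Set.range h).trans_le (Set.range_comp_subset_range t _)
  have hmaps : Set.MapsTo s (Set.range x) (Set.range x) := by
    rintro _ ⟨z, rfl⟩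
    exact hrange ▸ ⟨z, rfl⟩
  have hinj : Injective (hmaps.restrict s _ _) := by
    refine Finite.injective_iff_surjective.2 (hmaps.restrict_surjective_iff.2 ?_)
    rw [Set.SurjOn, ← Set.range_comp, hrange]
  obtain ⟨z, hz⟩ : ∃ z, s (x z) ≠ x z := by
    by_contra! h
    exact hxy (funext fun z => (h z).symm)
  refine ⟨s, hs, x z, ?_, hz⟩
  exact (show Semiconj Subtype.val (hmaps.restrict s _ _) s from fun _ => rfl).mapsTo_periodicPts
    (hinj.mem_periodicPts ⟨x z, z, rfl⟩)

theorem hTrivial_iff_periodicPtsFixed (hS : ∀ x ∈ S, ∀ y ∈ S, sgMul x y ∈ S) :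
    HTrivial S ↔ PeriodicPtsFixed S := by
  refine ⟨HTrivial.periodicPtsFixed hS, fun hfix x _ y _ hR hL => ?_⟩
  by_contra hxy
  obtain ⟨s, hs, a, ha, hna⟩ := exists_periodicPt_not_isFixedPt hR hL hxy
  exact hna (hfix s hs a ha)

end HTrivial

namespace SimpleGraph

variable {V : Type*} {G : SimpleGraph V}

theorem exists_isPath_forall_length_le [Finite V] [Nonempty V] (G : SimpleGraph V) :
    ∃ (u v : V) (p : G.Walk u v), p.IsPath ∧
      ∀ (u' v' : V) (q : G.Walk u' v'), q.IsPath → q.length ≤ p.length := by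
  classical
  have := Fintype.ofFinite V
  let P : ℕ → Prop := fun k => ∃ (u v : V) (p : G.Walk u v), p.IsPath ∧ p.length = k
  have hP0 : P 0 := ⟨_, _, Walk.nil (u := Classical.arbitrary V), Walk.IsPath.nil, rfl⟩
  obtain ⟨u, v, p, hp, hlen⟩ := Nat.findGreatest_spec (Nat.zero_le _) hP0
  exact ⟨u, v, p, hp, fun u' v' q hq =>
    hlen ▸ Nat.le_findGreatest hq.length_lt.le ⟨u', v', q, hq, rfl⟩⟩

theorem IsAcyclic.length_eq_one_of_adj (hG : G.IsAcyclic) {u v : V} {p : G.Walk u v}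
    (hp : p.IsPath) (h : G.Adj u v) : p.length = 1 :=
  congrArg (fun q : G.Path u v => q.1.length)
    ((hG.subsingleton_path u v).elim ⟨p, hp⟩ (.singleton h))

namespace Walk

variable {u v : V} {p : G.Walk u v}

theorem mem_support_of_adj_of_forall_length_le (hp : p.IsPath)
    (hmax : ∀ (u' v' : V) (q : G.Walk u' v'), q.IsPath → q.length ≤ p.length) {x : V}
    (h : G.Adj v x) : x ∈ p.support := by
  by_contra hx
  have := hmax _ _ _ (hp.concat hx h)
  simp at this

theorem getVert_pred_or_succ_of_adj (hdeg : ∀ w x y z, G.Adj w x → G.Adj w y → G.Adj w z →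
    x = y ∨ x = z ∨ y = z) (hp : p.IsPath) {i : ℕ} (hi0 : 0 < i) (hi : i < p.length) {y : V}
    (hy : G.Adj (p.getVert i) y) : y = p.getVert (i - 1) ∨ y = p.getVert (i + 1) := by
  have hpred : G.Adj (p.getVert i) (p.getVert (i - 1)) := by
    simpa [Nat.sub_add_cancel hi0] using (p.adj_getVert_succ (i := i - 1) (by omega)).symm
  rcases hdeg _ _ _ _ hy hpred (p.adj_getVert_succ hi) with h | h | h
  · exact .inl h
  · exact .inr h
  · have := hp.getVert_injOn (by simp; omega) (by simp; omega) h
    omega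

/-- The ends of a longest path have all their neighbours on it, by maximality, and so do its
inner vertices, by the degree bound. -/
theorem mem_support_of_forall_length_le (hconn : G.Preconnected)
    (hdeg : ∀ w x y z, G.Adj w x → G.Adj w y → G.Adj w z → x = y ∨ x = z ∨ y = z)
    (hp : p.IsPath) (hmax : ∀ (u' v' : V) (q : G.Walk u' v'), q.IsPath → q.length ≤ p.length)
    (x : V) : x ∈ p.support := by
  have hmax' : ∀ (u' v' : V) (q : G.Walk u' v'), q.IsPath → q.length ≤ p.reverse.length := by
    simpa using hmax
  have hnbr : ∀ i ≤ p.length, ∀ y, G.Adj (p.getVert i) y → y ∈ p.support := by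
    intro i hi y hy
    rcases Nat.eq_zero_or_pos i with rfl | hi0
    · simpa using mem_support_of_adj_of_forall_length_le hp.reverse hmax' (by simpa using hy)
    rcases hi.lt_or_eq with hi | rfl
    · rcases getVert_pred_or_succ_of_adj hdeg hp hi0 hi hy with rfl | rfl <;>
        exact p.getVert_mem_support _
    · exact mem_support_of_adj_of_forall_length_le hp hmax (by simpa using hy)
  induction (reachable_iff_reflTransGen u x).1 (hconn u x) with
  | refl => exact p.start_mem_support
  | tail _ hyz ih =>
    obtain ⟨i, rfl, hi⟩ := mem_support_iff_exists_getVert.1 ih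
    exact hnbr i hi _ hyz

/-- At an inner vertex this is the degree bound; an edge between the two ends of `p` is excluded
by acyclicity. -/
theorem IsPath.adj_getVert_iff (hacyc : G.IsAcyclic)
    (hdeg : ∀ w x y z, G.Adj w x → G.Adj w y → G.Adj w z → x = y ∨ x = z ∨ y = z)
    (hp : p.IsPath) {i j : ℕ} (hi : i ≤ p.length) (hj : j ≤ p.length) :
    G.Adj (p.getVert i) (p.getVert j) ↔ i + 1 = j ∨ j + 1 = i := by
  refine ⟨fun h => ?_, ?_⟩
  · have hij : i ≠ j := by
      rintro rfl
      exact h.ne rfl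
    by_cases hi' : 0 < i ∧ i < p.length
    · rcases getVert_pred_or_succ_of_adj hdeg hp hi'.1 hi'.2 h with h' | h' <;>
        · have := hp.getVert_injOn hj (by simp; omega) h'
          omega
    by_cases hj' : 0 < j ∧ j < p.length
    · rcases getVert_pred_or_succ_of_adj hdeg hp hj'.1 hj'.2 h.symm with h' | h' <;>
        · have := hp.getVert_injOn hi (by simp; omega) h'
          omega
    rcases (by omega : (i = 0 ∧ j = p.length) ∨ (j = 0 ∧ i = p.length)) with
      ⟨rfl, rfl⟩ | ⟨rfl, rfl⟩
    · have := hacyc.length_eq_one_of_adj hp (by simpa using h)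
      omega
    · have := hacyc.length_eq_one_of_adj hp (by simpa using h.symm)
      omega
  · rintro (rfl | rfl)
    · exact p.adj_getVert_succ (by omega)
    · exact (p.adj_getVert_succ (by omega)).symm

end Walk

theorem nonempty_iso_pathGraph [Finite V] (hconn : G.Connected) (hacyc : G.IsAcyclic)
    (hdeg : ∀ w x y z, G.Adj w x → G.Adj w y → G.Adj w z → x = y ∨ x = z ∨ y = z) :
    ∃ m, Nonempty (G ≃g pathGraph m) := by
  have := hconn.nonempty
  obtain ⟨u, v, p, hp, hmax⟩ := G.exists_isPath_forall_length_le
  let φ : Fin (p.length + 1) → V := fun i => p.getVert i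
  have hφ : Bijective φ := by
    refine ⟨fun i j h => Fin.ext (hp.getVert_injOn (by simp; omega) (by simp; omega) h),
      fun x => ?_⟩
    obtain ⟨i, hi, hle⟩ := Walk.mem_support_iff_exists_getVert.1
      (Walk.mem_support_of_forall_length_le hconn.preconnected hdeg hp hmax x)
    exact ⟨⟨i, by omega⟩, hi⟩
  refine ⟨p.length + 1, ⟨(Iso.symm ⟨Equiv.ofBijective φ hφ, fun {i j} => ?_⟩)⟩⟩
  rw [pathGraph_adj]
  exact Walk.IsPath.adj_getVert_iff hacyc hdeg hp (by omega) (by omega)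

end SimpleGraph

def Avoiding {α : Type*} (r : α → α → Prop) (z x y : α) : Prop :=
  r x y ∧ x ≠ z ∧ y ≠ z

theorem Relation.ReflTransGen.exists_head_avoiding {α : Type*} {r : α → α → Prop} {a b : α}
    (h : ReflTransGen r a b) (hab : a ≠ b) :
    ∃ c, r a c ∧ c ≠ a ∧ ReflTransGen (Avoiding r a) c b := by
  induction h with
  | refl => exact absurd rfl hab
  | @tail x y _ hxy ih =>
    by_cases hxa : x = a
    · subst hxa
      exact ⟨y, hxy, Ne.symm hab, .refl⟩
    · obtain ⟨c, hac, hca, hcx⟩ := ih (Ne.symm hxa)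
      exact ⟨c, hac, hca, hcx.tail ⟨hxy, hxa, Ne.symm hab⟩⟩

variable {D : Set (Fin n × Fin n)}

theorem dreach_arcT {a b : Fin n} (h : (a, b) ∈ D) (u : Fin n) : dreach D u (arcT a b u) := by
  by_cases hu : u = a
  · subst hu
    rw [arcT_self]
    exact .single h
  · rw [arcT_of_ne hu]
    exact .refl

theorem dreach_wordMap {l : List (Fin n × Fin n)} (hl : ∀ e ∈ l, e ∈ D) (u : Fin n) :
    dreach D u (wordMap l u) := by
  induction l generalizing u with
  | nil => exact .refl
  | cons e l ih =>
    rw [wordMap_cons]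
    exact (dreach_arcT (hl e (List.mem_cons_self ..)) u).trans
      (ih (fun e' he' => hl e' (List.mem_cons_of_mem e he')) _)

theorem exists_wordMap_of_reflTransGen_avoiding {z p q : Fin n}
    (h : ReflTransGen (Avoiding (fun x y => (x, y) ∈ D) z) p q) :
    ∃ l : List (Fin n × Fin n), (∀ e ∈ l, e ∈ D) ∧ wordMap l p = q ∧ wordMap l z = z := by
  induction h with
  | refl => exact ⟨[], by simp, rfl, rfl⟩
  | @tail b c _ hbc ih =>
    obtain ⟨l, hl, hp, hz⟩ := ih
    refine ⟨l ++ [(b, c)], ?_, ?_, ?_⟩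
    · intro e he
      rcases List.mem_append.1 he with he | he
      · exact hl e he
      · exact (List.mem_singleton.1 he) ▸ hbc.1
    · simp [wordMap_append, wordMap_singleton, hp, arcT_self]
    · simp [wordMap_append, wordMap_singleton, hz, arcT_of_ne hbc.2.1.symm]

/-- Following a walk from `a` to `c` avoiding `b`, then one from `b` to `a` avoiding `c`, then
one from `c` to `b` avoiding `a`, moves `a ↦ c ↦ c ↦ b` and `b ↦ b ↦ a ↦ a`. -/
theorem exists_swap_of_walks {a b c : Fin n} (hac : a ≠ c)
    (hP : ReflTransGen (Avoiding (fun x y => (x, y) ∈ D) b) a c)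
    (hQ : ReflTransGen (Avoiding (fun x y => (x, y) ∈ D) c) b a)
    (hR : ReflTransGen (Avoiding (fun x y => (x, y) ∈ D) a) c b) :
    ∃ α ∈ genSg D, α a = b ∧ α b = a := by
  obtain ⟨lP, hlP, hPa, hPb⟩ := exists_wordMap_of_reflTransGen_avoiding hP
  obtain ⟨lQ, hlQ, hQb, hQc⟩ := exists_wordMap_of_reflTransGen_avoiding hQ
  obtain ⟨lR, hlR, hRc, hRa⟩ := exists_wordMap_of_reflTransGen_avoiding hR
  have hne : lP ≠ [] := by
    rintro rfl
    exact hac hPa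
  refine ⟨wordMap (lP ++ lQ ++ lR), ⟨_, by simp [hne], ?_, rfl⟩, ?_, ?_⟩
  · simp only [List.mem_append]
    rintro e ((h | h) | h)
    exacts [hlP e h, hlQ e h, hlR e h]
  · simp [wordMap_append, hPa, hQc, hRc]
  · simp [wordMap_append, hPb, hQb, hRa]

theorem mem_strongComp_of_dreach {v u w z : Fin n} (hu : u ∈ strongComp D v)
    (hw : w ∈ strongComp D v) (huz : dreach D u z) (hzw : dreach D z w) :
    z ∈ strongComp D v :=
  ⟨hzw.trans hw.1, hu.2.trans huz⟩

theorem self_mem_strongComp (v : Fin n) : v ∈ strongComp D v := ⟨.refl, .refl⟩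

theorem reflTransGen_induce_strongComp {v a b : Fin n} (hb : b ∈ strongComp D v)
    (h : dreach D a b) (ha : a ∈ strongComp D v) :
    ReflTransGen ((underlying D).induce (strongComp D v)).Adj ⟨a, ha⟩ ⟨b, hb⟩ := by
  induction h using ReflTransGen.head_induction_on with
  | refl => exact .refl
  | @head a a' haa' ha'b ih =>
    have ha' := mem_strongComp_of_dreach ha hb (.single haa') ha'b
    by_cases he : a = a'
    · subst he
      exact ih ha'
    · have hadj : ((underlying D).induce (strongComp D v)).Adj ⟨a, ha⟩ ⟨a', ha'⟩ :=
        ⟨he, .inl haa'⟩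
      exact .head hadj (ih ha')

theorem connected_induce_strongComp (v : Fin n) :
    ((underlying D).induce (strongComp D v)).Connected := by
  have : Nonempty (strongComp D v) := ⟨⟨v, self_mem_strongComp v⟩⟩
  refine ⟨fun x y => (SimpleGraph.reachable_iff_reflTransGen _ _).2 ?_⟩
  exact reflTransGen_induce_strongComp y.2 (x.2.1.trans y.2.2) x.2

namespace PeriodicPtsFixed

theorem eq_of_swap {S : Set (Fin n → Fin n)} (hS : PeriodicPtsFixed S) {α : Fin n → Fin n}
    (hα : α ∈ S) {a b : Fin n} (hab : α a = b) (hba : α b = a) : a = b := by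
  have ha : IsPeriodicPt α 2 a := by simp [IsPeriodicPt, IsFixedPt, hab, hba]
  exact (hS α hα a (mk_mem_periodicPts two_pos ha)).symm.trans hab

/-- A directed cycle `b → a → c ⇝ b` of length at least three through `a` only once
produces an element of `⟨D⟩` exchanging `a` and `b`. -/
theorem not_reflTransGen_avoiding (hS : PeriodicPtsFixed (genSg D))
    {a b c : Fin n} (hab : a ≠ b) (hbc : b ≠ c) (hca : c ≠ a) (hba : (b, a) ∈ D)
    (hac : (a, c) ∈ D) : ¬ ReflTransGen (Avoiding (fun x y => (x, y) ∈ D) a) c b := by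
  intro hR
  obtain ⟨α, hα, h₁, h₂⟩ := exists_swap_of_walks hca.symm (.single ⟨hac, hab, hbc.symm⟩)
    (.single ⟨hba, hbc, hca.symm⟩) hR
  exact hab (hS.eq_of_swap hα h₁ h₂)

theorem mem_of_dreach (hS : PeriodicPtsFixed (genSg D)) {u w : Fin n}
    (huw : (u, w) ∈ D) (hne : u ≠ w) (hwu : dreach D w u) : (w, u) ∈ D := by
  obtain ⟨c, hwc, hcw, hcu⟩ := hwu.exists_head_avoiding hne.symm
  by_cases hcu' : c = u
  · exact hcu' ▸ hwc
  · exact hS.not_reflTransGen_avoiding hne.symm (Ne.symm hcu') hcw huw hwc hcu |>.elim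

theorem mem_of_induce_strongComp_adj (hS : PeriodicPtsFixed (genSg D)) {v : Fin n}
    {x y : strongComp D v} (h : ((underlying D).induce (strongComp D v)).Adj x y) :
    ((x : Fin n), (y : Fin n)) ∈ D := by
  rcases h with ⟨hne, h | h⟩
  · exact h
  · exact hS.mem_of_dreach h hne.symm (x.2.1.trans y.2.2)

theorem isAcyclic_induce_strongComp (hS : PeriodicPtsFixed (genSg D)) (v : Fin n) :
    ((underlying D).induce (strongComp D v)).IsAcyclic := by
  refine SimpleGraph.isAcyclic_iff_forall_adj_isBridge.2 fun x y hxy => ?_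
  rw [SimpleGraph.isBridge_iff, SimpleGraph.reachable_iff_reflTransGen]
  intro hreach
  obtain ⟨c, hxc, hcx, hcy⟩ := hreach.exists_head_avoiding hxy.ne
  rw [SimpleGraph.deleteEdges_adj] at hxc
  have hcy' : c ≠ y := by
    rintro rfl
    exact hxc.2 rfl
  have hcy : ReflTransGen (Avoiding (fun a b => (a, b) ∈ D) (x : Fin n)) c y :=
    hcy.lift Subtype.val fun p q hpq => ⟨hS.mem_of_induce_strongComp_adj
      (SimpleGraph.deleteEdges_le _ hpq.1), Subtype.coe_injective.ne hpq.2.1,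
      Subtype.coe_injective.ne hpq.2.2⟩
  exact hS.not_reflTransGen_avoiding (Subtype.coe_injective.ne hxy.ne)
    (Subtype.coe_injective.ne hcy'.symm) (Subtype.coe_injective.ne hcx)
    (hS.mem_of_induce_strongComp_adj hxy.symm) (hS.mem_of_induce_strongComp_adj hxc.1) hcy

/-- Walking through the common neighbour `u` gives the three walks of `exists_swap_of_walks`. -/
theorem eq_or_eq_of_induce_strongComp_adj (hS : PeriodicPtsFixed (genSg D)) {v : Fin n}
    {u x y z : strongComp D v} (hx : ((underlying D).induce (strongComp D v)).Adj u x)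
    (hy : ((underlying D).induce (strongComp D v)).Adj u y)
    (hz : ((underlying D).induce (strongComp D v)).Adj u z) : x = y ∨ x = z ∨ y = z := by
  by_contra! h
  obtain ⟨hxy, hxz, hyz⟩ := h
  have walk : ∀ {a b c : strongComp D v}, ((underlying D).induce (strongComp D v)).Adj u a →
      ((underlying D).induce (strongComp D v)).Adj u b →
      ((underlying D).induce (strongComp D v)).Adj u c → a ≠ c → b ≠ c →
      ReflTransGen (Avoiding (fun p q => (p, q) ∈ D) (c : Fin n)) a b :=
    fun ha hb hc hac hbc =>
      .head ⟨hS.mem_of_induce_strongComp_adj ha.symm, Subtype.coe_injective.ne hac,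
        Subtype.coe_injective.ne hc.ne⟩
      (.single ⟨hS.mem_of_induce_strongComp_adj hb, Subtype.coe_injective.ne hc.ne,
        Subtype.coe_injective.ne hbc⟩)
  obtain ⟨α, hα, h₁, h₂⟩ := exists_swap_of_walks (Subtype.coe_injective.ne hxz)
    (walk hx hz hy hxy hyz.symm) (walk hy hx hz hyz hxz) (walk hz hy hx hxz.symm hxy.symm)
  exact hxy (Subtype.ext (hS.eq_of_swap hα h₁ h₂))

theorem exists_iso_pathGraph (hS : PeriodicPtsFixed (genSg D)) (v : Fin n) :
    ∃ m, Nonempty ((underlying D).induce (strongComp D v) ≃g SimpleGraph.pathGraph m) :=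
  SimpleGraph.nonempty_iso_pathGraph (connected_induce_strongComp v)
    (hS.isAcyclic_induce_strongComp v) fun _ _ _ _ => hS.eq_or_eq_of_induce_strongComp_adj

end PeriodicPtsFixed

theorem dreach_apply_of_mem_genSg {α : Fin n → Fin n} (hα : α ∈ genSg D) (u : Fin n) :
    dreach D u (α u) := by
  obtain ⟨l, -, hl, rfl⟩ := hα
  exact dreach_wordMap hl u

theorem dreach_iterate {α : Fin n → Fin n} (hα : α ∈ genSg D) (u : Fin n) :
    ∀ k, dreach D u (α^[k] u)
  | 0 => .refl
  | k + 1 => by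
    rw [iterate_succ_apply']
    exact (dreach_iterate hα u k).trans (dreach_apply_of_mem_genSg hα _)

theorem iterate_mem_strongComp {α : Fin n → Fin n} (hα : α ∈ genSg D) {a : Fin n}
    (ha : a ∈ periodicPts α) (t : ℕ) : α^[t] a ∈ strongComp D a := by
  refine ⟨?_, dreach_iterate hα a t⟩
  have hk := minimalPeriod_pos_of_mem_periodicPts ha
  have hback : α^[minimalPeriod α a * t - t] (α^[t] a) = a := by
    rw [← iterate_add_apply, Nat.sub_add_cancel (Nat.le_mul_of_pos_left t hk)]
    exact ((isPeriodicPt_minimalPeriod α a).mul_const t).eq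
  have := dreach_iterate hα (α^[t] a) (minimalPeriod α a * t - t)
  rwa [hback] at this

theorem exists_position_of_iso_pathGraph {C : Set (Fin n)} {m : ℕ}
    (ψ : (underlying D).induce C ≃g SimpleGraph.pathGraph m) :
    ∃ p : Fin n → ℕ, Set.InjOn p C ∧
      ∀ x ∈ C, ∀ y ∈ C, (x, y) ∈ D → p y ≤ p x + 1 ∧ p x ≤ p y + 1 := by
  classical
  refine ⟨fun x => if h : x ∈ C then ψ ⟨x, h⟩ else 0, fun x hx y hy hxy => ?_,
    fun x hx y hy hxy => ?_⟩
  · simp only [dif_pos hx, dif_pos hy] at hxy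
    exact congrArg Subtype.val (ψ.injective (Fin.ext hxy))
  · simp only [dif_pos hx, dif_pos hy]
    by_cases hne : x = y
    · subst hne
      omega
    · have := ψ.map_adj_iff.2
        (show ((underlying D).induce C).Adj ⟨x, hx⟩ ⟨y, hy⟩ from ⟨hne, .inl hxy⟩)
      rw [SimpleGraph.pathGraph_adj] at this
      omega

theorem arcT_mono {C : Set (Fin n)} {p : Fin n → ℕ} (hinj : Set.InjOn p C)
    (hstep : ∀ x ∈ C, ∀ y ∈ C, (x, y) ∈ D → p y ≤ p x + 1 ∧ p x ≤ p y + 1)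
    {a b u w : Fin n} (hab : (a, b) ∈ D) (hu : u ∈ C) (hw : w ∈ C) (hu' : arcT a b u ∈ C)
    (hw' : arcT a b w ∈ C) (h : p u ≤ p w) : p (arcT a b u) ≤ p (arcT a b w) := by
  rcases eq_or_ne u w with rfl | huw
  · rfl
  have hlt : p u < p w := h.lt_of_ne fun h' => huw (hinj hu hw h')
  by_cases hua : u = a
  · subst hua
    rw [arcT_self] at hu' ⊢
    rw [arcT_of_ne huw.symm]
    have := (hstep u hu b hu' hab).1
    omega
  by_cases hwa : w = a
  · subst hwa
    rw [arcT_self] at hw' ⊢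
    rw [arcT_of_ne hua]
    have := (hstep w hw b hw' hab).2
    omega
  · rwa [arcT_of_ne hua, arcT_of_ne hwa]

theorem wordMap_mono {c : Fin n} {p : Fin n → ℕ} (hinj : Set.InjOn p (strongComp D c))
    (hstep : ∀ x ∈ strongComp D c, ∀ y ∈ strongComp D c, (x, y) ∈ D →
      p y ≤ p x + 1 ∧ p x ≤ p y + 1)
    {l : List (Fin n × Fin n)} (hl : ∀ e ∈ l, e ∈ D) {u w : Fin n} (hu : u ∈ strongComp D c)
    (hw : w ∈ strongComp D c) (hu' : wordMap l u ∈ strongComp D c)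
    (hw' : wordMap l w ∈ strongComp D c) (h : p u ≤ p w) : p (wordMap l u) ≤ p (wordMap l w) := by
  induction l generalizing u w with
  | nil => exact h
  | cons e l ih =>
    have he := hl e (List.mem_cons_self ..)
    have hl' : ∀ e' ∈ l, e' ∈ D := fun e' he' => hl e' (List.mem_cons_of_mem e he')
    simp only [wordMap_cons, comp_apply] at hu' hw' ⊢
    have hmem : ∀ z ∈ strongComp D c, wordMap l (arcT e.1 e.2 z) ∈ strongComp D c →
        arcT e.1 e.2 z ∈ strongComp D c := fun z hz hz' =>
      mem_strongComp_of_dreach hz hz' (dreach_arcT he z) (dreach_wordMap hl' _)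
    exact ih hl' (hmem u hu hu') (hmem w hw hw') hu' hw'
      (arcT_mono hinj hstep he hu hw (hmem u hu hu') (hmem w hw hw') h)

theorem mono_of_mem_genSg {c : Fin n} {p : Fin n → ℕ} (hinj : Set.InjOn p (strongComp D c))
    (hstep : ∀ x ∈ strongComp D c, ∀ y ∈ strongComp D c, (x, y) ∈ D →
      p y ≤ p x + 1 ∧ p x ≤ p y + 1)
    {α : Fin n → Fin n} (hα : α ∈ genSg D) {u w : Fin n} (hu : u ∈ strongComp D c)
    (hw : w ∈ strongComp D c) (hu' : α u ∈ strongComp D c) (hw' : α w ∈ strongComp D c)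
    (h : p u ≤ p w) : p (α u) ≤ p (α w) := by
  obtain ⟨l, -, hl, rfl⟩ := hα
  exact wordMap_mono hinj hstep hl hu hw hu' hw' h

/-- Number the strong component of `a` along its path. An arc moves a point only to a neighbour,
so every element of `⟨D⟩` preserves the order of the points whose trajectories stay in the
component. On the orbit of `a` it is then a monotone permutation, which fixes the lowest point
`u` of the orbit because the preimage of `u` lies above `u`. -/
theorem periodicPtsFixed_of_iso_pathGraph
    (h : ∀ v : Fin n, ∃ m : ℕ,
      Nonempty ((underlying D).induce (strongComp D v) ≃g SimpleGraph.pathGraph m)) :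
    PeriodicPtsFixed (genSg D) := by
  intro α hα a ha
  obtain ⟨m, ⟨ψ⟩⟩ := h a
  obtain ⟨p, hinj, hstep⟩ := exists_position_of_iso_pathGraph ψ
  have horb := iterate_mem_strongComp hα ha
  obtain ⟨_, ⟨i, rfl⟩, hmin⟩ :=
    Set.exists_min_image (Set.range fun t => α^[t] a) p (Set.toFinite _) ⟨a, 0, rfl⟩
  have hk := minimalPeriod_pos_of_mem_periodicPts ha
  have hsucc : α (α^[i] a) = α^[i + 1] a := (iterate_succ_apply' α i a).symm
  have hpre : α (α^[i + minimalPeriod α a - 1] a) = α^[i] a := by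
    rw [← iterate_succ_apply' α, Nat.succ_eq_add_one, Nat.sub_add_cancel (by omega),
      iterate_add_apply, iterate_minimalPeriod]
  have hle := mono_of_mem_genSg hinj hstep hα (horb i) (horb _) (hsucc ▸ horb (i + 1))
    (hpre ▸ horb i) (hmin _ ⟨_, rfl⟩)
  rw [hpre] at hle
  have hge := hmin _ ⟨i + 1, hsucc.symm⟩
  exact isFixedPt_of_isFixedPt_iterate ha
    (hinj (hsucc ▸ horb (i + 1)) (horb i) (hle.antisymm hge))

end

theorem stmt0_general (n : ℕ) (D : Set (Fin n × Fin n)) :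
    HTrivial (genSg D) ↔
      ∀ v : Fin n, ∃ m : ℕ,
        Nonempty ((underlying D).induce (strongComp D v) ≃g SimpleGraph.pathGraph m) := by
  rw [hTrivial_iff_periodicPtsFixed fun _ hx _ hy => sgMul_mem_genSg hx hy]
  exact ⟨PeriodicPtsFixed.exists_iso_pathGraph, periodicPtsFixed_of_iso_pathGraph⟩

/-- `⟨D⟩` is `H`-trivial iff the underlying graph of every strong
component of `D` is a path graph. -/
theorem stmt0 (n : ℕ) (D : Set (Fin n × Fin n)) (hloop : ∀ a : Fin n, (a, a) ∉ D) :
    HTrivial (genSg D) ↔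
      ∀ v : Fin n, ∃ m : ℕ,
        Nonempty ((underlying D).induce (strongComp D v) ≃g SimpleGraph.pathGraph m) :=
  stmt0_general n D
end

section
/- For every n≥3, the cycle graph C_n satisfies l(C_n)=n−1. -/
/-!
Every generator `a → b` identifies `a` and `b`, so no element of `⟨D⟩` is injective; a cycle of
length `n` would make it a permutation, hence `l(D) ≤ n - 1` for every loopless `D`.
Conversely, along the path `0 → 1 → ⋯ → n-1` of `C_n` the word `(n-2 → n-1) ⋯ (1 → 2) (0 → 1)`
shifts `0, …, n-2` up by one, and following it by `n-1 → 0` gives a transformation that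
rotates `0, 1, …, n-2` cyclically.
-/

open Function

section GenSg

variable {n : ℕ} {D : Set (Fin n × Fin n)}

lemma foldl_arcT_eq_comp (l : List (Fin n × Fin n)) (g : Fin n → Fin n) :
    l.foldl (fun f p => arcT p.1 p.2 ∘ f) g = l.foldl (fun f p => arcT p.1 p.2 ∘ f) id ∘ g := by
  induction l generalizing g with
  | nil => rfl
  | cons p l ih => simp only [List.foldl_cons, ih (arcT p.1 p.2 ∘ g), ih (arcT p.1 p.2 ∘ id)]; rfl

lemma arcT_mem_genSg {a b : Fin n} (h : (a, b) ∈ D) : arcT a b ∈ genSg D :=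
  ⟨[(a, b)], List.cons_ne_nil _ _, by simpa using h, rfl⟩

lemma comp_mem_genSg {α β : Fin n → Fin n} (hα : α ∈ genSg D) (hβ : β ∈ genSg D) :
    β ∘ α ∈ genSg D := by
  obtain ⟨l₁, hne, hl₁, rfl⟩ := hα
  obtain ⟨l₂, -, hl₂, rfl⟩ := hβ
  refine ⟨l₁ ++ l₂, by simp [hne], fun p hp => ?_, ?_⟩
  · rcases List.mem_append.1 hp with hp | hp
    exacts [hl₁ p hp, hl₂ p hp]
  · rw [List.foldl_append, foldl_arcT_eq_comp l₂ (List.foldl _ id l₁)]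

lemma not_injective_of_mem_genSg (hD : ∀ p ∈ D, p.1 ≠ p.2) {α : Fin n → Fin n}
    (hα : α ∈ genSg D) : ¬ Injective α := by
  obtain ⟨_ | ⟨p, l⟩, hne, hl, rfl⟩ := hα
  · exact absurd rfl hne
  intro hinj
  rw [List.foldl_cons, foldl_arcT_eq_comp] at hinj
  have hcollapse : (arcT p.1 p.2 ∘ id) p.1 = (arcT p.1 p.2 ∘ id) p.2 := by simp [arcT]
  exact hD p (hl p List.mem_cons_self) (hinj.of_comp hcollapse)

end GenSg

section Cycles

variable {n : ℕ} {α : Fin n → Fin n} {k : ℕ}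

lemma IsCycleOf.le (hc : IsCycleOf α k) : k ≤ n := by
  obtain ⟨hk, a, ha, -⟩ := hc
  have : NeZero k := ⟨hk.ne'⟩
  simpa [ZMod.card] using Fintype.card_le_of_injective a ha

lemma IsCycleOf.lt_of_not_injective (hc : IsCycleOf α k) (hα : ¬ Injective α) : k < n := by
  refine lt_of_le_of_ne hc.le ?_
  rintro rfl
  obtain ⟨hk, a, ha, hcyc⟩ := hc
  have : NeZero k := ⟨hk.ne'⟩
  have ha_surj : Surjective a := (Fintype.bijective_iff_injective_and_card a).2 ⟨ha, by simp⟩ |>.2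
  refine hα (Finite.injective_iff_surjective.2 fun v => ?_)
  obtain ⟨i, rfl⟩ := ha_surj v
  exact ⟨a (i - 1), by rw [hcyc, sub_add_cancel]⟩

lemma isCycleOf_of_val_eq_succ_mod {β : Fin n → Fin n} {m : ℕ} (hm : 0 < m) (hmn : m ≤ n)
    (hβ : ∀ v : Fin n, v.val < m → (β v).val = (v.val + 1) % m) : IsCycleOf β m := by
  have : NeZero m := ⟨hm.ne'⟩
  refine ⟨hm, fun i => ⟨i.val, (ZMod.val_lt i).trans_le hmn⟩, fun i j hij => ?_, fun i => ?_⟩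
  · exact ZMod.val_injective m (Fin.mk.inj hij)
  · ext
    dsimp only
    rw [hβ _ (ZMod.val_lt i), ZMod.val_add, ZMod.val_one_eq_one_mod, Nat.add_mod_mod]

end Cycles

section Rotation

variable {n : ℕ} {D : Set (Fin n × Fin n)}

lemma exists_shift_mem_genSg (hD : ∀ u v : Fin n, u.val + 1 = v.val → (u, v) ∈ D) :
    ∀ j < n, ∃ f ∈ insert id (genSg D),
      ∀ v : Fin n, (f v).val = if v.val < j then v.val + 1 else v.val := by
  intro j
  induction j with
  | zero => exact fun _ => ⟨id, Set.mem_insert _ _, fun v => by simp⟩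
  | succ j ih =>
    intro hj
    obtain ⟨f, hf, hfv⟩ := ih (by omega)
    have harc := arcT_mem_genSg (hD ⟨j, by omega⟩ ⟨j + 1, hj⟩ rfl)
    refine ⟨f ∘ arcT ⟨j, by omega⟩ ⟨j + 1, hj⟩, ?_, fun v => ?_⟩
    · rcases hf with rfl | hf
      exacts [Or.inr harc, Or.inr (comp_mem_genSg harc hf)]
    · by_cases hv : v.val = j
      · simp [arcT, Fin.ext_iff, hv, hfv]
      · simp only [comp_apply, arcT, Fin.ext_iff, hv, if_false, hfv]
        split_ifs <;> omega

lemma exists_mem_genSg_val_eq_succ_mod (hn : 0 < n)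
    (hD : ∀ u v : Fin n, v.val = (u.val + 1) % n → (u, v) ∈ D) :
    ∃ β ∈ genSg D, ∀ v : Fin n, v.val < n - 1 → (β v).val = (v.val + 1) % (n - 1) := by
  obtain ⟨f, hf, hfv⟩ := exists_shift_mem_genSg
    (fun u v h => hD u v (by rw [h, Nat.mod_eq_of_lt v.isLt])) (n - 1) (by omega)
  have hclose := arcT_mem_genSg (hD ⟨n - 1, by omega⟩ ⟨0, by omega⟩
    (by simp only [Nat.sub_add_cancel (by omega : 1 ≤ n), Nat.mod_self]))
  refine ⟨arcT ⟨n - 1, by omega⟩ ⟨0, by omega⟩ ∘ f, ?_, fun v hv => ?_⟩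
  · rcases hf with rfl | hf
    exacts [hclose, comp_mem_genSg hf hclose]
  · have hfv' := hfv v
    rw [if_pos hv] at hfv'
    by_cases hlast : v.val + 1 = n - 1
    · simp [arcT, Fin.ext_iff, hfv', hlast]
    · simp only [comp_apply, arcT, Fin.ext_iff, hfv', hlast, if_false]
      rw [Nat.mod_eq_of_lt (by omega)]

end Rotation

lemma cycleGraph_adj_of_val_eq_succ_mod {n : ℕ} (hn : 2 ≤ n) {u v : Fin n}
    (h : v.val = (u.val + 1) % n) : (SimpleGraph.cycleGraph n).Adj u v := by
  obtain ⟨k, rfl⟩ : ∃ k, n = k + 2 := ⟨n - 2, by omega⟩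
  have hv : v = u + 1 := Fin.ext (by rw [h, Fin.val_add, Fin.val_one])
  exact SimpleGraph.cycleGraph_adj.2 (Or.inr (by rw [hv, add_sub_cancel_left]))

/-- `l(C_n) = n - 1` for `n ≥ 3`. -/
theorem stmt2 (n : ℕ) (hn : 3 ≤ n) : lG (SimpleGraph.cycleGraph n) = n - 1 := by
  obtain ⟨β, hβ, hrot⟩ := exists_mem_genSg_val_eq_succ_mod (D := arcsOf (SimpleGraph.cycleGraph n))
    (by omega) fun u v h => cycleGraph_adj_of_val_eq_succ_mod (by omega) h
  refine IsGreatest.csSup_eq ⟨⟨β, hβ, isCycleOf_of_val_eq_succ_mod (by omega) (by omega) hrot⟩, ?_⟩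
  rintro k ⟨α, hα, hk⟩
  have hloopless : ∀ p ∈ arcsOf (SimpleGraph.cycleGraph n), p.1 ≠ p.2 := fun _ hp => hp.ne
  exact Nat.le_sub_one_of_lt (hk.lt_of_not_injective (not_injective_of_mem_genSg hloopless hα))
end
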